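/- Let k ≥ 3 and H be a connected k-uniform hypergraph with degrees d_i. Then min over edges e and pairs {i,j} ⊆ e of (d_i + d_j) ≤ ρ(Q(H)) ≤ max over edges e and pairs {i,j} ⊆ e of (d_i + d_j), with equality on either side if and only if H is regular. -/

import Mathlib

open scoped BigOperators

namespace TensorSR

variable {n p : ℕ}

/-- `(A x)_i` for a tensor whose rows are indexed by `Fin n` and whose
"tails" (the remaining `p` indices, so the tensor has order `p+1`) are
functions `Fin p → Fin n`.  The real entries are coerced to `ℂ`. -/
noncomputable def tApply (A : Fin n → (Fin p → Fin n) → ℝ) (x : Fin n → ℂ) (i : Fin n) : ℂ :=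
  ∑ t : Fin p → Fin n, (A i t : ℂ) * ∏ j, x (t j)

/-- `lam` is an eigenvalue of the tensor `A`: `A x = lam x^{[p]}` for some `x ≠ 0`. -/
def IsEigenvalue (A : Fin n → (Fin p → Fin n) → ℝ) (lam : ℂ) : Prop :=
  ∃ x : Fin n → ℂ, x ≠ 0 ∧ ∀ i, tApply A x i = lam * (x i) ^ p

/-- The spectral radius: the sup of moduli of eigenvalues. -/
noncomputable def specRad (A : Fin n → (Fin p → Fin n) → ℝ) : ℝ :=
  sSup {r : ℝ | ∃ lam : ℂ, IsEigenvalue A lam ∧ r = ‖lam‖}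

/-- `A` is entrywise nonnegative. -/
def Nonneg (A : Fin n → (Fin p → Fin n) → ℝ) : Prop := ∀ i t, 0 ≤ A i t

/-- Weak irreducibility: there is no nonempty proper `I ⊆ [n]` such that
`a_{i t} = 0` whenever `i ∈ I` and some entry of `t` lies outside `I`. -/
def WeaklyIrreducible (A : Fin n → (Fin p → Fin n) → ℝ) : Prop :=
  ¬ ∃ I : Set (Fin n), I.Nonempty ∧ I ≠ Set.univ ∧
      ∀ i ∈ I, ∀ t : Fin p → Fin n, (∃ j, t j ∉ I) → A i t = 0

/-- The `i`-th row sum of `A`. -/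
def rowSum (A : Fin n → (Fin p → Fin n) → ℝ) (i : Fin n) : ℝ := ∑ t, A i t

/-- `j ∈ N(i)`: some nonzero entry in row `i` involves index `j`. -/
def Nbr (A : Fin n → (Fin p → Fin n) → ℝ) (i j : Fin n) : Prop :=
  ∃ t, A i t ≠ 0 ∧ ∃ q, t q = j

end TensorSR

open TensorSR

namespace HypSR

variable {n k : ℕ}

/-- Connectivity of a hypergraph with edge set `E`: every two vertices are
joined by a walk. -/
def HConnected (E : Finset (Finset (Fin n))) : Prop :=
  ∀ u v : Fin n,
    Relation.ReflTransGen (fun a b : Fin n => ∃ e ∈ E, a ∈ e ∧ b ∈ e) u v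

/-- Degree of a vertex. -/
def deg (E : Finset (Finset (Fin n))) (i : Fin n) : ℕ :=
  (E.filter (fun e => i ∈ e)).card

/-- The adjacency tensor of a `k`-uniform hypergraph: order `k`, dimension `n`,
entry `1/(k-1)!` at `(i₁,…,i_k)` when `{i₁,…,i_k}` is an edge, and `0` otherwise. -/
noncomputable def adjT (E : Finset (Finset (Fin n))) (k : ℕ) :
    Fin n → (Fin (k-1) → Fin n) → ℝ :=
  fun i t =>
    if insert i (Finset.image t Finset.univ) ∈ E then ((k-1).factorial : ℝ)⁻¹ else 0

/-- The signless Laplacian tensor `Q = D + A`. -/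
noncomputable def signlessT (E : Finset (Finset (Fin n))) (k : ℕ) :
    Fin n → (Fin (k-1) → Fin n) → ℝ :=
  fun i t => adjT E k i t + if (∀ q, t q = i) then (deg E i : ℝ) else 0

end HypSR

open HypSR

/-!
Maximising `∑ i, y i * (Q y)_i` over the nonnegative unit `k`-sphere gives an eigenvector `y ≥ 0`
of `Q` with eigenvalue `r`; for connected `H` a perturbation along an edge that meets both the
support of `y` and its complement shows `y > 0`. Comparing any eigenvector `x` with `y` through
`s = max |x_i| / y_i` (Collatz–Wielandt) gives `|μ| ≤ r`, so `r = ρ(Q)`.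

The same comparison against the test vector `x_u = (M - d_u)^{-1/(k-1)}`, `M` the largest pair
sum, gives `ρ ≤ M`, and against `x_u = (m - d_u)^{-1/(k-1)}` (where `d_u < m`) gives `m ≤ ρ`.
In the equality case every comparison is tight, which propagates along edges to
`d_i + d_j = M` (resp. `m`) for all pairs in an edge; as `k ≥ 3`, an edge holds a third vertex,
so adjacent degrees agree and `H` is regular.
-/

lemma Finset.eq_of_prod_eq_of_le {ι R : Type*} [CommMonoidWithZero R] [PartialOrder R]
    [ZeroLEOneClass R] [PosMulStrictMono R] [Nontrivial R] {s : Finset ι} {f g : ι → R}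
    (hf : ∀ i ∈ s, 0 < f i) (hfg : ∀ i ∈ s, f i ≤ g i) (h : ∏ i ∈ s, f i = ∏ i ∈ s, g i) :
    ∀ i ∈ s, f i = g i := by
  by_contra! ⟨i, hi, hne⟩
  exact (prod_lt_prod hf hfg ⟨i, hi, (hfg i hi).lt_of_ne hne⟩).ne h

lemma exists_le_mul_eq {ι : Type*} [Finite ι] [Nonempty ι] (a : ι → ℝ) {z : ι → ℝ}
    (hz : ∀ i, 0 < z i) : ∃ s i₀, a i₀ = s * z i₀ ∧ ∀ i, a i ≤ s * z i := by
  obtain ⟨i₀, hi₀⟩ := Finite.exists_max fun i => a i / z i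
  exact ⟨a i₀ / z i₀, i₀, (div_mul_cancel₀ _ (hz i₀).ne').symm,
    fun i => (div_le_iff₀ (hz i)).mp (hi₀ i)⟩

lemma Finset.sum_prod_of_image_eq {α R : Type*} [DecidableEq α] [Fintype α] [CommSemiring R] {p : ℕ}
    {s : Finset α} (hs : s.card = p) (x : α → R) :
    ∑ t : Fin p → α with image t univ = s, ∏ j, x (t j) = p.factorial * ∏ v ∈ s, x v := by
  have hinj : ∀ t : Fin p → α, image t univ = s → Function.Injective t := fun t ht a b hab =>
    injOn_of_card_image_eq (by rw [ht, hs, card_univ, Fintype.card_fin]) (by simp) (by simp) hab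
  have hterm : ∀ t ∈ ({t : Fin p → α | image t univ = s} : Finset _),
      ∏ j, x (t j) = ∏ v ∈ s, x v := fun t ht => by
    rw [mem_filter] at ht
    rw [← ht.2, prod_image fun a _ b _ h => hinj t ht.2 h]
  have hcard : ({t : Fin p → α | image t univ = s} : Finset _).card = p.factorial := by
    have hfin : Fintype.card (Fin p) = Fintype.card s := by simp [hs]
    suffices (univ : Finset (Fin p ≃ s)).card =
        ({t : Fin p → α | image t univ = s} : Finset _).card by
      rw [← this, card_univ, Fintype.card_equiv (Fintype.equivOfCardEq hfin), Fintype.card_fin]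
    refine card_bij (fun σ _ j => (σ j : α)) (fun σ _ => mem_filter.mpr ⟨mem_univ _, ?_⟩)
      (fun σ₁ _ σ₂ _ h => ?_) fun t ht => ?_
    · ext v
      simp only [mem_image, mem_univ, true_and]
      exact ⟨fun ⟨j, hj⟩ => hj ▸ (σ j).2, fun hv => ⟨σ.symm ⟨v, hv⟩, by simp⟩⟩
    · exact Equiv.ext fun j => Subtype.ext (congr_fun h j)
    · rw [mem_filter] at ht
      have hmem : ∀ j, t j ∈ s := fun j => ht.2 ▸ mem_image_of_mem t (mem_univ j)
      have hbij : Function.Bijective fun j => (⟨t j, hmem j⟩ : s) := by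
        rw [Fintype.bijective_iff_injective_and_card]
        exact ⟨fun a b h => hinj t ht.2 (congrArg Subtype.val h), hfin⟩
      exact ⟨Equiv.ofBijective _ hbij, mem_univ _, rfl⟩
  rw [sum_congr rfl hterm, sum_const, hcard, nsmul_eq_mul]

lemma Finset.insert_image_eq_iff {α : Type*} [DecidableEq α] {k : ℕ} {e : Finset α} {i : α}
    (he : e.card = k) (hi : i ∈ e) (t : Fin (k - 1) → α) :
    insert i (image t univ) = e ↔ image t univ = e.erase i := by
  constructor
  · rintro rfl
    have hit : i ∉ image t univ := fun hit => by
      have hle : (image t univ).card ≤ k - 1 := card_image_le.trans (by simp)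
      rw [insert_eq_of_mem hit] at he
      have := card_pos.mpr ⟨i, hit⟩
      omega
    rw [erase_insert hit]
  · intro h
    rw [h, insert_erase hi]

lemma TensorSR.specRad_eq_of_forall_norm_le {n p : ℕ} {A : Fin n → (Fin p → Fin n) → ℝ} {r : ℝ}
    (hr : 0 ≤ r) (hA : IsEigenvalue A r) (hle : ∀ μ, IsEigenvalue A μ → ‖μ‖ ≤ r) :
    specRad A = r := by
  have hub : ∀ s ∈ {s : ℝ | ∃ μ, IsEigenvalue A μ ∧ s = ‖μ‖}, s ≤ r := by
    rintro _ ⟨μ, hμ, rfl⟩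
    exact hle μ hμ
  refine le_antisymm (Real.sSup_le hub hr) (le_csSup ⟨r, hub⟩ ⟨r, hA, ?_⟩)
  rw [Complex.norm_real, Real.norm_of_nonneg hr]

namespace HypSR

open Finset

variable {n k : ℕ} {E : Finset (Finset (Fin n))}

lemma HConnected.mem_of_closed (hconn : HConnected E) {S : Set (Fin n)} {i₀ : Fin n}
    (hi₀ : i₀ ∈ S) (hS : ∀ e ∈ E, ∀ u ∈ e, u ∈ S → ∀ v ∈ e, v ∈ S) (v : Fin n) : v ∈ S := by
  induction hconn i₀ v with
  | refl => exact hi₀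
  | tail _ hstep ih =>
    obtain ⟨e, he, hb, hc⟩ := hstep
    exact hS e he _ hb ih _ hc

section Apply

variable {R : Type*} [CommSemiring R]

def adjApply (E : Finset (Finset (Fin n))) (x : Fin n → R) (i : Fin n) : R :=
  ∑ e ∈ E with i ∈ e, ∏ u ∈ e.erase i, x u

def signlessApply (E : Finset (Finset (Fin n))) (k : ℕ) (x : Fin n → R) (i : Fin n) : R :=
  deg E i * x i ^ (k - 1) + adjApply E x i

lemma map_signlessApply {S : Type*} [CommSemiring S] (f : R →+* S) (x : Fin n → R) (i : Fin n) :
    f (signlessApply E k x i) = signlessApply E k (f ∘ x) i := by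
  simp [signlessApply, adjApply, map_sum, map_prod]

lemma adjApply_const (hunif : ∀ e ∈ E, e.card = k) (c : R) (i : Fin n) :
    adjApply E (fun _ => c) i = deg E i * c ^ (k - 1) := by
  rw [adjApply, deg, ← nsmul_eq_mul, ← sum_const]
  refine sum_congr rfl fun e he => ?_
  rw [mem_filter] at he
  rw [prod_const, card_erase_of_mem he.2, hunif e he.1]

lemma adjApply_smul (hunif : ∀ e ∈ E, e.card = k) (s : R)
    (z : Fin n → R) (i : Fin n) :
    adjApply E (fun u => s * z u) i = s ^ (k - 1) * adjApply E z i := by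
  rw [adjApply, adjApply, mul_sum]
  refine sum_congr rfl fun e he => ?_
  rw [mem_filter] at he
  rw [prod_mul_distrib, prod_const, card_erase_of_mem he.2, hunif e he.1]

lemma signlessApply_smul (hunif : ∀ e ∈ E, e.card = k) (s : R)
    (z : Fin n → R) (i : Fin n) :
    signlessApply E k (fun u => s * z u) i = s ^ (k - 1) * signlessApply E k z i := by
  rw [signlessApply, signlessApply, adjApply_smul hunif]
  ring

end Apply

-- Each edge `e ∋ i` is hit by the `(k - 1)!` enumerations of `e.erase i`, which cancel the
-- normalisation `1 / (k - 1)!` of `adjT`.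
lemma sum_adjT_mul_prod (hunif : ∀ e ∈ E, e.card = k) (x : Fin n → ℂ) (i : Fin n) :
    ∑ t, (adjT E k i t : ℂ) * ∏ j, x (t j) = adjApply E x i := by
  have hmaps : ∀ t ∈ ({t | insert i (image t univ) ∈ E} : Finset (Fin (k - 1) → Fin n)),
      insert i (image t univ) ∈ E.filter (i ∈ ·) := fun t ht =>
    mem_filter.mpr ⟨(mem_filter.mp ht).2, mem_insert_self _ _⟩
  calc ∑ t, (adjT E k i t : ℂ) * ∏ j, x (t j)
      = ((k - 1).factorial : ℂ)⁻¹ *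
          ∑ t with insert i (image t univ) ∈ E, ∏ j, x (t j) := by
        rw [mul_sum, sum_filter]
        refine sum_congr rfl fun t _ => ?_
        split_ifs <;> simp [adjT, *]
    _ = ((k - 1).factorial : ℂ)⁻¹ * ∑ e ∈ E with i ∈ e,
          ∑ t : Fin (k - 1) → Fin n with image t univ = e.erase i, ∏ j, x (t j) := by
        rw [← sum_fiberwise_of_maps_to hmaps]
        refine congrArg _ (sum_congr rfl fun e he => ?_)
        rw [filter_filter]
        refine sum_congr (filter_congr fun t _ => ?_) fun _ _ => rfl
        rw [mem_filter] at he
        rw [← insert_image_eq_iff (hunif e he.1) he.2]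
        exact ⟨fun h => h.2, fun h => ⟨h ▸ he.1, h⟩⟩
    _ = adjApply E x i := by
        rw [adjApply, mul_sum]
        refine sum_congr rfl fun e he => ?_
        rw [mem_filter] at he
        rw [sum_prod_of_image_eq (by rw [card_erase_of_mem he.2, hunif e he.1]), ← mul_assoc,
          inv_mul_cancel₀ (by exact_mod_cast (k - 1).factorial_ne_zero), one_mul]

lemma tApply_signlessT (hunif : ∀ e ∈ E, e.card = k) (x : Fin n → ℂ) (i : Fin n) :
    tApply (signlessT E k) x i = signlessApply E k x i := by
  have hdiag : ∑ t : Fin (k - 1) → Fin n,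
      ((if ∀ q, t q = i then (deg E i : ℝ) else 0 : ℝ) : ℂ) * ∏ j, x (t j)
        = deg E i * x i ^ (k - 1) := by
    rw [sum_eq_single (fun _ => i) (fun t _ ht => ?_) (by simp)]
    · simp
    · rw [if_neg fun h => ht (funext h)]
      simp
  simp only [tApply, signlessT, Complex.ofReal_add, add_mul, sum_add_distrib,
    sum_adjT_mul_prod hunif, hdiag, signlessApply]
  ring

section Order

variable {a b z : Fin n → ℝ} {i : Fin n} {c M : ℝ}

lemma adjApply_mono (ha : ∀ u, 0 ≤ a u)
    (hab : ∀ e ∈ E, i ∈ e → ∀ u ∈ e.erase i, a u ≤ b u) : adjApply E a i ≤ adjApply E b i :=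
  sum_le_sum fun e he => prod_le_prod (fun u _ => ha u) fun u hu =>
    hab e (mem_filter.mp he).1 (mem_filter.mp he).2 u hu

lemma eq_of_adjApply_eq (ha : ∀ u, 0 < a u)
    (hab : ∀ e ∈ E, i ∈ e → ∀ u ∈ e.erase i, a u ≤ b u) (h : adjApply E a i = adjApply E b i) :
    ∀ e ∈ E, i ∈ e → ∀ u ∈ e.erase i, a u = b u := by
  have hprod := (sum_eq_sum_iff_of_le fun e he => prod_le_prod (fun u _ => (ha u).le)
    fun u hu => hab e (mem_filter.mp he).1 (mem_filter.mp he).2 u hu).mp h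
  exact fun e he hie => Finset.eq_of_prod_eq_of_le (fun u _ => ha u) (hab e he hie)
    (hprod e (mem_filter.mpr ⟨he, hie⟩))

lemma signlessApply_mono (ha : ∀ u, 0 ≤ a u) (hab : ∀ u, a u ≤ b u) :
    signlessApply E k a i ≤ signlessApply E k b i := by
  unfold signlessApply
  gcongr
  · exact ha i
  · exact hab i
  · exact adjApply_mono ha fun _ _ _ u _ => hab u

lemma le_of_le_signlessApply_of_signlessApply_le (hunif : ∀ e ∈ E, e.card = k)
    (ha : ∀ i, 0 ≤ a i) (ha₀ : a ≠ 0) (hz : ∀ i, 0 < z i)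
    (hca : ∀ i, c * a i ^ (k - 1) ≤ signlessApply E k a i)
    (hzM : ∀ i, signlessApply E k z i ≤ M * z i ^ (k - 1)) : c ≤ M := by
  obtain ⟨j, hj⟩ := Function.ne_iff.mp ha₀
  have : Nonempty (Fin n) := ⟨j⟩
  obtain ⟨s, i₀, hi₀, has⟩ := exists_le_mul_eq a hz
  have hs : 0 < s := pos_of_mul_pos_left (((ha j).lt_of_ne' hj).trans_le (has j)) (hz j).le
  have hai₀ : 0 < a i₀ := hi₀ ▸ mul_pos hs (hz i₀)
  refine le_of_mul_le_mul_right ?_ (pow_pos hai₀ (k - 1))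
  calc c * a i₀ ^ (k - 1) ≤ signlessApply E k a i₀ := hca i₀
    _ ≤ signlessApply E k (fun u => s * z u) i₀ := signlessApply_mono ha has
    _ = s ^ (k - 1) * signlessApply E k z i₀ := signlessApply_smul hunif s z i₀
    _ ≤ s ^ (k - 1) * (M * z i₀ ^ (k - 1)) := by gcongr; exact hzM i₀
    _ = M * a i₀ ^ (k - 1) := by rw [hi₀]; ring

lemma signlessApply_eq_of_le_signlessApply_of_signlessApply_le (hunif : ∀ e ∈ E, e.card = k)
    (hconn : HConnected E) (ha : ∀ i, 0 < a i) (hz : ∀ i, 0 < z i)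
    (hca : ∀ i, c * a i ^ (k - 1) ≤ signlessApply E k a i)
    (hzM : ∀ i, signlessApply E k z i ≤ M * z i ^ (k - 1)) (hMc : M ≤ c) (i : Fin n) :
    signlessApply E k a i = c * a i ^ (k - 1) ∧ signlessApply E k z i = M * z i ^ (k - 1) := by
  have : Nonempty (Fin n) := ⟨i⟩
  obtain ⟨s, i₀, hi₀, has⟩ := exists_le_mul_eq a hz
  have hs : 0 < s := pos_of_mul_pos_left (hi₀ ▸ ha i₀) (hz i₀).le
  have key : ∀ v, a v = s * z v → signlessApply E k a v = c * a v ^ (k - 1) ∧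
      signlessApply E k z v = M * z v ^ (k - 1) ∧
      adjApply E a v = adjApply E (fun u => s * z u) v := by
    intro v hv
    have h₁ := signlessApply_mono (E := E) (k := k) (i := v) (fun u => (ha u).le) has
    have h₂ := signlessApply_smul hunif s z v
    have h₃ : s ^ (k - 1) * signlessApply E k z v ≤ s ^ (k - 1) * (M * z v ^ (k - 1)) := by
      gcongr; exact hzM v
    have h₄ : s ^ (k - 1) * (M * z v ^ (k - 1)) ≤ c * a v ^ (k - 1) := by
      rw [hv]
      calc s ^ (k - 1) * (M * z v ^ (k - 1)) = M * (s * z v) ^ (k - 1) := by ring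
        _ ≤ c * (s * z v) ^ (k - 1) :=
          mul_le_mul_of_nonneg_right hMc (pow_pos (mul_pos hs (hz v)) _).le
    have hW : signlessApply E k a v = signlessApply E k (fun u => s * z u) v := by
      linarith [hca v]
    refine ⟨by linarith [hca v], mul_left_cancel₀ (pow_pos hs (k - 1)).ne' ?_, ?_⟩
    · linarith [hca v]
    · simpa only [signlessApply, hv, add_right_inj] using hW
  have hall : ∀ v, a v = s * z v := hconn.mem_of_closed (S := {v | a v = s * z v}) hi₀
    fun e he u hu hau v hv => by
      rcases eq_or_ne v u with rfl | hvu
      · exact hau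
      · exact eq_of_adjApply_eq ha (fun _ _ _ w _ => has w) (key u hau).2.2 e he hu v
          (mem_erase.mpr ⟨hvu, hv⟩)
  exact ⟨(key i (hall i)).1, (key i (hall i)).2.1⟩

end Order

lemma norm_signlessApply_le {𝕜 : Type*} [NormedField 𝕜] (x : Fin n → 𝕜) (i : Fin n) :
    ‖signlessApply E k x i‖ ≤ signlessApply E k (fun u => ‖x u‖) i := by
  unfold signlessApply adjApply
  refine (norm_add_le _ _).trans (add_le_add ?_ ?_)
  · rw [norm_mul, norm_pow]
    gcongr
    simpa using Nat.norm_cast_le (α := 𝕜) (deg E i)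
  · exact (norm_sum_le _ _).trans (sum_le_sum fun e _ => (norm_prod _ _).le)

lemma isEigenvalue_signlessT (hunif : ∀ e ∈ E, e.card = k) {y : Fin n → ℝ} (hy : y ≠ 0) {r : ℝ}
    (h : ∀ i, signlessApply E k y i = r * y i ^ (k - 1)) : IsEigenvalue (signlessT E k) r := by
  refine ⟨fun i => y i, fun h₀ => hy (funext fun i => by simpa using congr_fun h₀ i), fun i => ?_⟩
  have := congrArg Complex.ofRealHom (h i)
  rw [map_signlessApply] at this
  rw [tApply_signlessT hunif]
  refine this.trans ?_
  simp

lemma specRad_signlessT_eq [Nonempty (Fin n)] (hunif : ∀ e ∈ E, e.card = k) {y : Fin n → ℝ}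
    (hy : ∀ i, 0 < y i) {r : ℝ} (hr : 0 ≤ r) (h : ∀ i, signlessApply E k y i = r * y i ^ (k - 1)) :
    specRad (signlessT E k) = r := by
  have hy₀ : y ≠ 0 := fun h₀ => (hy (Classical.arbitrary _)).ne' (congr_fun h₀ _)
  refine TensorSR.specRad_eq_of_forall_norm_le hr (isEigenvalue_signlessT hunif hy₀ h) ?_
  rintro μ ⟨x, hx₀, hx⟩
  refine le_of_le_signlessApply_of_signlessApply_le hunif (a := fun i => ‖x i‖)
    (fun i => norm_nonneg _) (fun h₀ => hx₀ (funext fun i => norm_eq_zero.mp (congr_fun h₀ i)))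
    hy (fun i => ?_) fun i => (h i).le
  rw [← norm_pow, ← norm_mul, ← hx i, tApply_signlessT hunif]
  exact norm_signlessApply_le x i

-- For a `k`-uniform hypergraph this is `∑ i, y i * signlessApply E k y i`.
noncomputable def signlessForm (E : Finset (Finset (Fin n))) (k : ℕ) (y : Fin n → ℝ) : ℝ :=
  ∑ i, deg E i * y i ^ k + k * ∑ e ∈ E, ∏ u ∈ e, y u

lemma signlessForm_smul (hunif : ∀ e ∈ E, e.card = k) (t : ℝ) (y : Fin n → ℝ) :
    signlessForm E k (fun u => t * y u) = t ^ k * signlessForm E k y := by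
  have hedge : ∀ e ∈ E, ∏ u ∈ e, t * y u = t ^ k * ∏ u ∈ e, y u := fun e he => by
    rw [prod_mul_distrib, prod_const, hunif e he]
  rw [signlessForm, signlessForm, sum_congr rfl hedge, ← mul_sum]
  simp only [mul_pow, mul_left_comm _ (t ^ k), ← mul_sum]
  ring

lemma signlessForm_nonneg {y : Fin n → ℝ} (hy : ∀ i, 0 ≤ y i) : 0 ≤ signlessForm E k y :=
  add_nonneg (sum_nonneg fun i _ => by have := hy i; positivity)
    (mul_nonneg k.cast_nonneg (sum_nonneg fun e _ => prod_nonneg fun u _ => hy u))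

lemma sum_pow_pos {y : Fin n → ℝ} (hy : ∀ i, 0 ≤ y i) (hy₀ : y ≠ 0) : 0 < ∑ i, y i ^ k := by
  obtain ⟨j, hj⟩ := Function.ne_iff.mp hy₀
  exact sum_pos' (fun i _ => pow_nonneg (hy i) k) ⟨j, mem_univ j, pow_pos ((hy j).lt_of_ne' hj) k⟩

lemma sum_pow_max_le {y : Fin n → ℝ} (hy : ∀ i, 0 ≤ y i) {ε : ℝ} (hε : 0 ≤ ε) :
    ∑ j, max (y j) ε ^ k ≤ ∑ j, y j ^ k + n * ε ^ k := by
  calc ∑ j, max (y j) ε ^ k ≤ ∑ j, (y j ^ k + ε ^ k) := sum_le_sum fun j _ => by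
        have := pow_nonneg (hy j) k
        have := pow_nonneg hε k
        rcases max_cases (y j) ε with ⟨h, _⟩ | ⟨h, _⟩ <;> rw [h] <;> linarith
    _ = ∑ j, y j ^ k + n * ε ^ k := by
        rw [sum_add_distrib, sum_const, card_univ, Fintype.card_fin, nsmul_eq_mul]

lemma exists_forall_signlessForm_le [Nonempty (Fin n)] (hk : k ≠ 0)
    (hunif : ∀ e ∈ E, e.card = k) :
    ∃ (y : Fin n → ℝ) (r : ℝ), (∀ i, 0 ≤ y i) ∧ y ≠ 0 ∧ signlessForm E k y = r * ∑ i, y i ^ k ∧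
      ∀ z : Fin n → ℝ, (∀ i, 0 ≤ z i) → signlessForm E k z ≤ r * ∑ i, z i ^ k := by
  have hne : ∀ z ∈ stdSimplex ℝ (Fin n), z ≠ 0 := fun z hz h₀ => by
    simp [h₀, stdSimplex] at hz
  have hcont : ContinuousOn (fun z => signlessForm E k z / ∑ i, z i ^ k) (stdSimplex ℝ (Fin n)) :=
    ContinuousOn.div (by unfold signlessForm; fun_prop) (by fun_prop)
      fun z hz => (sum_pow_pos hz.1 (hne z hz)).ne'
  obtain ⟨y, hy, hmax⟩ := (isCompact_stdSimplex ℝ (Fin n)).exists_isMaxOn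
    ⟨_, single_mem_stdSimplex ℝ (Classical.arbitrary _)⟩ hcont
  have hNy := sum_pow_pos (k := k) hy.1 (hne y hy)
  refine ⟨y, _, hy.1, hne y hy, (div_mul_cancel₀ _ hNy.ne').symm, fun z hz => ?_⟩
  rcases eq_or_ne z 0 with rfl | hz₀
  · have := signlessForm_smul hunif 0 y
    simp only [zero_mul, zero_pow hk] at this
    simp only [zero_pow hk, Pi.zero_apply, sum_const_zero, mul_zero]
    exact this.le
  have hs : 0 < ∑ i, z i := sum_pos' (fun i _ => hz i)
    (by obtain ⟨j, hj⟩ := Function.ne_iff.mp hz₀; exact ⟨j, mem_univ j, (hz j).lt_of_ne' hj⟩)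
  have ht : 0 < (∑ i, z i)⁻¹ := inv_pos.mpr hs
  have := hmax (a := fun u => (∑ i, z i)⁻¹ * z u)
    ⟨fun i => mul_nonneg ht.le (hz i), by rw [← mul_sum, inv_mul_cancel₀ hs.ne']⟩
  simp only [Set.mem_ofPred_eq, signlessForm_smul hunif, mul_pow, ← mul_sum] at this
  rwa [mul_div_mul_left _ _ (pow_pos ht k).ne', div_le_iff₀ (sum_pow_pos hz hz₀)] at this

lemma signlessForm_update (hk : k ≠ 0) (y : Fin n → ℝ) (i : Fin n) (u : ℝ) :
    signlessForm E k (Function.update y i u) =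
      signlessForm E k (Function.update y i 0) + k * adjApply E y i * u + deg E i * u ^ k := by
  have key : ∀ u, signlessForm E k (Function.update y i u) =
      (∑ j ∈ univ.erase i, deg E j * y j ^ k + k * ∑ e ∈ E with i ∉ e, ∏ v ∈ e, y v)
        + k * adjApply E y i * u + deg E i * u ^ k := fun u => by
    have h₁ : ∀ j ∈ univ.erase i, (deg E j : ℝ) * Function.update y i u j ^ k =
        deg E j * y j ^ k := fun j hj => by rw [Function.update_of_ne (ne_of_mem_erase hj)]
    have h₂ : ∀ e ∈ E.filter (i ∈ ·), ∏ v ∈ e, Function.update y i u v =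
        u * ∏ v ∈ e.erase i, y v := fun e he => by
      rw [prod_update_of_mem (mem_filter.mp he).2, sdiff_singleton_eq_erase]
    have h₃ : ∀ e ∈ E.filter (i ∉ ·), ∏ v ∈ e, Function.update y i u v = ∏ v ∈ e, y v :=
      fun e he => prod_update_of_notMem (mem_filter.mp he).2 _ _
    rw [signlessForm, ← add_sum_erase _ _ (mem_univ i), ← sum_filter_add_sum_filter_not E (i ∈ ·),
      Function.update_self, sum_congr rfl h₁, sum_congr rfl h₂, sum_congr rfl h₃, ← mul_sum,
      adjApply]
    ring
  rw [key, key 0]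
  simp [zero_pow hk]

lemma sum_pow_update (hk : k ≠ 0) (y : Fin n → ℝ) (i : Fin n) (u : ℝ) :
    ∑ j, Function.update y i u j ^ k = ∑ j, Function.update y i 0 j ^ k + u ^ k := by
  have h : ∀ v, ∑ j ∈ univ.erase i, Function.update y i v j ^ k = ∑ j ∈ univ.erase i, y j ^ k :=
    fun v => sum_congr rfl fun j hj => by rw [Function.update_of_ne (ne_of_mem_erase hj)]
  rw [← add_sum_erase _ _ (mem_univ i), ← add_sum_erase _ _ (mem_univ i), h, h,
    Function.update_self, Function.update_self, zero_pow hk]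
  ring

lemma signlessForm_add_le {y z : Fin n → ℝ} (hy : ∀ i, 0 ≤ y i) (hyz : ∀ i, y i ≤ z i)
    {e : Finset (Fin n)} (he : e ∈ E) :
    signlessForm E k y + k * (∏ u ∈ e, z u - ∏ u ∈ e, y u) ≤ signlessForm E k z := by
  have hprod : ∀ e : Finset (Fin n), ∏ u ∈ e, y u ≤ ∏ u ∈ e, z u :=
    fun e => prod_le_prod (fun u _ => hy u) fun u _ => hyz u
  have hdeg : ∑ i, deg E i * y i ^ k ≤ ∑ i, deg E i * z i ^ k :=
    sum_le_sum fun i _ => by gcongr; exacts [hy i, hyz i]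
  have hedge : ∑ e ∈ E, ∏ u ∈ e, y u + (∏ u ∈ e, z u - ∏ u ∈ e, y u) ≤
      ∑ e ∈ E, ∏ u ∈ e, z u := by
    rw [← add_sum_erase _ _ he, ← add_sum_erase _ _ he]
    linarith [sum_le_sum fun e' (_ : e' ∈ E.erase e) => hprod e']
  have := mul_le_mul_of_nonneg_left hedge k.cast_nonneg
  rw [signlessForm, signlessForm]
  linarith

section RayleighMaximizer

variable {y : Fin n → ℝ} {r : ℝ}

lemma pos_of_forall_signlessForm_le (hk : k ≠ 0) (hunif : ∀ e ∈ E, e.card = k)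
    (hconn : HConnected E) (hy : ∀ i, 0 ≤ y i) (hFy : signlessForm E k y = r * ∑ i, y i ^ k)
    (hmax : ∀ z : Fin n → ℝ, (∀ i, 0 ≤ z i) → signlessForm E k z ≤ r * ∑ i, z i ^ k)
    (hy₀ : y ≠ 0) (i : Fin n) : 0 < y i := by
  obtain ⟨j, hj⟩ := Function.ne_iff.mp hy₀
  by_contra hyi
  have hcross : ¬ ∀ e ∈ E, ∀ u ∈ e, 0 < y u → ∀ v ∈ e, 0 < y v :=
    fun h => hyi (hconn.mem_of_closed (S := {v | 0 < y v}) ((hy j).lt_of_ne' hj) h i)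
  push Not at hcross
  obtain ⟨e, he, u, hu, hyu, v, hv, hyv⟩ := hcross
  have hr : 0 ≤ r := nonneg_of_mul_nonneg_left (hFy ▸ signlessForm_nonneg hy) (sum_pow_pos hy hy₀)
  have hd : 0 < r * n + 1 := by positivity
  -- Raising the zero coordinates to `ε` gains `k * y u * ε ^ (k - 1)` on the edge `e` but
  -- costs at most `r * n * ε ^ k`; this `ε` makes the gain win.
  set ε := k * y u / (r * n + 1)
  have hε₀ : 0 < ε := div_pos (mul_pos (by positivity) hyu) hd
  have hεk : ε ^ k = ε * ε ^ (k - 1) := by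
    rw [← pow_succ', Nat.sub_add_cancel (Nat.one_le_iff_ne_zero.mpr hk)]
  set z := fun j => max (y j) ε
  have hN : ∑ j, z j ^ k ≤ ∑ j, y j ^ k + n * ε ^ k := sum_pow_max_le hy hε₀.le
  have hprod : y u * ε ^ (k - 1) ≤ ∏ w ∈ e, z w := by
    rw [← mul_prod_erase e z hu]
    refine mul_le_mul (le_max_left _ _) ?_ (by positivity) ((hy u).trans (le_max_left _ _))
    calc ε ^ (k - 1) = ∏ w ∈ e.erase u, ε := by rw [prod_const, card_erase_of_mem hu, hunif e he]
      _ ≤ ∏ w ∈ e.erase u, z w := prod_le_prod (fun _ _ => hε₀.le) fun w _ => le_max_right _ _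
  have hprod_y : ∏ w ∈ e, y w = 0 := prod_eq_zero hv (le_antisymm hyv (hy v))
  have hF := signlessForm_add_le (k := k) hy (fun j => le_max_left (y j) ε) he
  have hzmax := hmax z fun j => hε₀.le.trans (le_max_right _ _)
  have h₁ := mul_le_mul_of_nonneg_left hN hr
  have h₂ := mul_le_mul_of_nonneg_left hprod (k.cast_nonneg : (0 : ℝ) ≤ k)
  rw [hprod_y, sub_zero] at hF
  rw [hεk] at h₁
  have key : k * y u * ε ^ (k - 1) ≤ r * n * ε * ε ^ (k - 1) := by linarith
  have h₃ := le_of_mul_le_mul_right key (pow_pos hε₀ _)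
  have h₄ : ε * (r * n + 1) = k * y u := div_mul_cancel₀ _ hd.ne'
  linarith

lemma signlessApply_eq_of_forall_signlessForm_le (hk : k ≠ 0) (hy : ∀ i, 0 ≤ y i)
    (hFy : signlessForm E k y = r * ∑ i, y i ^ k)
    (hmax : ∀ z : Fin n → ℝ, (∀ i, 0 ≤ z i) → signlessForm E k z ≤ r * ∑ i, z i ^ k)
    {i : Fin n} (hyi : 0 < y i) :
    signlessApply E k y i = r * y i ^ (k - 1) := by
  have hφ : ∀ u, r * ∑ j, Function.update y i u j ^ k - signlessForm E k (Function.update y i u) =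
      (r * ∑ j, Function.update y i 0 j ^ k - signlessForm E k (Function.update y i 0)) +
        (r - deg E i) * u ^ k - k * adjApply E y i * u := fun u => by
    rw [sum_pow_update hk, signlessForm_update hk]
    ring
  have hmin : IsLocalMin (fun u => (r * ∑ j, Function.update y i 0 j ^ k -
      signlessForm E k (Function.update y i 0)) + (r - deg E i) * u ^ k - k * adjApply E y i * u)
      (y i) := by
    filter_upwards [Ici_mem_nhds hyi] with u hu
    have hyu : ∀ j, 0 ≤ Function.update y i u j := fun j => by
      rcases eq_or_ne j i with rfl | hj
      · simpa using hu
      · simpa [hj] using hy j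
    rw [← hφ, ← hφ, Function.update_eq_self, hFy, sub_self, sub_nonneg]
    exact hmax _ hyu
  have hderiv := (((hasDerivAt_pow k (y i)).const_mul (r - deg E i)).const_add
    (r * ∑ j, Function.update y i 0 j ^ k - signlessForm E k (Function.update y i 0))).sub
    ((hasDerivAt_id (y i)).const_mul (k * adjApply E y i))
  have h := hmin.hasDerivAt_eq_zero hderiv
  refine mul_left_cancel₀ (Nat.cast_ne_zero.mpr hk : (k : ℝ) ≠ 0) ?_
  rw [signlessApply]
  linear_combination -h

end RayleighMaximizer

lemma exists_pos_eigenvector [Nonempty (Fin n)] (hk : k ≠ 0) (hunif : ∀ e ∈ E, e.card = k)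
    (hconn : HConnected E) : ∃ y : Fin n → ℝ, (∀ i, 0 < y i) ∧
      ∀ i, signlessApply E k y i = specRad (signlessT E k) * y i ^ (k - 1) := by
  obtain ⟨y, r, hy, hy₀, hFy, hmax⟩ := exists_forall_signlessForm_le hk hunif
  have hpos := pos_of_forall_signlessForm_le hk hunif hconn hy hFy hmax hy₀
  have hr : 0 ≤ r := nonneg_of_mul_nonneg_left (hFy ▸ signlessForm_nonneg hy) (sum_pow_pos hy hy₀)
  have hW i := signlessApply_eq_of_forall_signlessForm_le hk hy hFy hmax (hpos i)
  exact ⟨y, hpos, by rwa [specRad_signlessT_eq hunif hpos hr hW]⟩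

lemma deg_pos (hk : k ≠ 0) (hunif : ∀ e ∈ E, e.card = k) (hconn : HConnected E)
    (hE : E.Nonempty) (i : Fin n) : 0 < deg E i := by
  obtain ⟨e, he⟩ := hE
  obtain ⟨u, hu⟩ := card_pos.mp (((hunif e he).symm ▸ Nat.pos_of_ne_zero hk : 0 < e.card))
  obtain ⟨e', he', hi⟩ : ∃ e ∈ E, i ∈ e :=
    hconn.mem_of_closed (S := {v | ∃ e ∈ E, v ∈ e}) ⟨e, he, hu⟩
      (fun e he _ _ _ v hv => ⟨e, he, hv⟩) i
  exact card_pos.mpr ⟨e', mem_filter.mpr ⟨he', hi⟩⟩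

noncomputable def invRoot (p : ℕ) (t : ℝ) : ℝ := t⁻¹ ^ ((p : ℝ)⁻¹)

section invRoot

variable {p : ℕ} {s t : ℝ}

lemma invRoot_pos (ht : 0 < t) : 0 < invRoot p t := Real.rpow_pos_of_pos (inv_pos.mpr ht) _

lemma invRoot_pow (hp : p ≠ 0) (ht : 0 ≤ t) : invRoot p t ^ p = t⁻¹ :=
  Real.rpow_inv_natCast_pow (inv_nonneg.mpr ht) hp

lemma invRoot_le_invRoot (hs : 0 < s) (hst : s ≤ t) : invRoot p t ≤ invRoot p s :=
  Real.rpow_le_rpow (inv_nonneg.mpr (hs.trans_le hst).le) (inv_anti₀ hs hst) (by positivity)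

lemma mul_invRoot_pow (hp : p ≠ 0) (ht : 0 < t) : t * invRoot p t ^ p = 1 := by
  rw [invRoot_pow hp ht.le, mul_inv_cancel₀ ht.ne']

lemma invRoot_injOn (hp : p ≠ 0) (hs : 0 < s) (ht : 0 < t) (h : invRoot p s = invRoot p t) :
    s = t := by
  have := congrArg (· ^ p) h
  simp only [invRoot_pow hp hs.le, invRoot_pow hp ht.le] at this
  exact inv_injective this

end invRoot

lemma adjApply_invRoot_deg (hk : 2 ≤ k) (hunif : ∀ e ∈ E, e.card = k) {i : Fin n}
    (hi : 0 < deg E i) : adjApply E (fun _ => invRoot (k - 1) (deg E i)) i = 1 := by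
  rw [adjApply_const hunif, mul_invRoot_pow (by omega) (Nat.cast_pos.mpr hi)]

lemma deg_lt_of_pairSum_le (hk : 2 ≤ k) (hunif : ∀ e ∈ E, e.card = k)
    (hdeg : ∀ i, 0 < deg E i) {M : ℝ}
    (hM : ∀ e ∈ E, ∀ i ∈ e, ∀ j ∈ e, i ≠ j → (deg E i : ℝ) + deg E j ≤ M) (i : Fin n) :
    (deg E i : ℝ) < M := by
  obtain ⟨e, he⟩ := card_pos.mp (hdeg i)
  rw [mem_filter] at he
  obtain ⟨j, hj, hji⟩ := exists_mem_ne (by rw [hunif e he.1]; omega : 1 < e.card) i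
  have := hM e he.1 i he.2 j hj hji.symm
  have : (0 : ℝ) < deg E j := by exact_mod_cast hdeg j
  linarith

/- `x_u ^ (k - 1) = 1 / (M - d_u)`, so `Q x ≤ M x^[k-1]` at `i` reduces to `(A x)_i ≤ 1`; this
holds because `M - d_u ≥ d_i` bounds every neighbour `u` of `i` by the constant vector
`d_i ^ (-1/(k-1))`, whose `(A ·)_i` is exactly `1`. -/
noncomputable def upperTestVector (E : Finset (Finset (Fin n))) (k : ℕ) (M : ℝ) (u : Fin n) : ℝ :=
  invRoot (k - 1) (M - deg E u)

section UpperBound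

variable {M : ℝ}

lemma upperTestVector_pos {u : Fin n} (hu : (deg E u : ℝ) < M) : 0 < upperTestVector E k M u :=
  invRoot_pos (sub_pos.mpr hu)

lemma mul_upperTestVector_pow (hk : 2 ≤ k) {u : Fin n} (hu : (deg E u : ℝ) < M) :
    (M - deg E u) * upperTestVector E k M u ^ (k - 1) = 1 :=
  mul_invRoot_pow (by omega) (sub_pos.mpr hu)

lemma upperTestVector_le_invRoot_deg
    (hM : ∀ e ∈ E, ∀ i ∈ e, ∀ j ∈ e, i ≠ j → (deg E i : ℝ) + deg E j ≤ M) {i : Fin n}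
    (hi : 0 < deg E i) : ∀ e ∈ E, i ∈ e → ∀ u ∈ e.erase i,
      upperTestVector E k M u ≤ invRoot (k - 1) (deg E i) :=
  fun e he hie u hu => invRoot_le_invRoot (Nat.cast_pos.mpr hi) <| by
    linarith [hM e he u (mem_of_mem_erase hu) i hie (ne_of_mem_erase hu)]

lemma signlessApply_upperTestVector_le (hk : 2 ≤ k) (hunif : ∀ e ∈ E, e.card = k)
    (hdeg : ∀ i, 0 < deg E i)
    (hM : ∀ e ∈ E, ∀ i ∈ e, ∀ j ∈ e, i ≠ j → (deg E i : ℝ) + deg E j ≤ M) (i : Fin n) :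
    signlessApply E k (upperTestVector E k M) i ≤ M * upperTestVector E k M i ^ (k - 1) := by
  have hdM := deg_lt_of_pairSum_le hk hunif hdeg hM
  have hA := (adjApply_mono (fun u => (upperTestVector_pos (hdM u)).le)
    (upperTestVector_le_invRoot_deg hM (hdeg i))).trans_eq (adjApply_invRoot_deg hk hunif (hdeg i))
  rw [signlessApply]
  linear_combination hA - mul_upperTestVector_pow hk (hdM i)

lemma pairSum_eq_of_signlessApply_upperTestVector_eq (hk : 2 ≤ k) (hunif : ∀ e ∈ E, e.card = k)
    (hdeg : ∀ i, 0 < deg E i)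
    (hM : ∀ e ∈ E, ∀ i ∈ e, ∀ j ∈ e, i ≠ j → (deg E i : ℝ) + deg E j ≤ M)
    (h : ∀ i, signlessApply E k (upperTestVector E k M) i = M * upperTestVector E k M i ^ (k - 1))
    {e : Finset (Fin n)} (he : e ∈ E) {i j : Fin n} (hi : i ∈ e) (hj : j ∈ e) (hij : i ≠ j) :
    (deg E i : ℝ) + deg E j = M := by
  have hdM := deg_lt_of_pairSum_le hk hunif hdeg hM
  have hadj : adjApply E (upperTestVector E k M) j =
      adjApply E (fun _ => invRoot (k - 1) (deg E j)) j := by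
    have := h j
    rw [signlessApply] at this
    rw [adjApply_invRoot_deg hk hunif (hdeg j)]
    linear_combination this + mul_upperTestVector_pow hk (hdM j)
  have := invRoot_injOn (by omega) (sub_pos.mpr (hdM i)) (Nat.cast_pos.mpr (hdeg j))
    (eq_of_adjApply_eq (fun u => upperTestVector_pos (hdM u))
      (upperTestVector_le_invRoot_deg hM (hdeg j)) hadj e he hj i (mem_erase.mpr ⟨hij, hi⟩))
  linarith

lemma specRad_signlessT_le_of_pairSum_le [Nonempty (Fin n)] (hk : 2 ≤ k)
    (hunif : ∀ e ∈ E, e.card = k) (hconn : HConnected E) (hE : E.Nonempty)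
    (hM : ∀ e ∈ E, ∀ i ∈ e, ∀ j ∈ e, i ≠ j → (deg E i : ℝ) + deg E j ≤ M) :
    specRad (signlessT E k) ≤ M ∧ (specRad (signlessT E k) = M →
      ∀ e ∈ E, ∀ i ∈ e, ∀ j ∈ e, i ≠ j → (deg E i : ℝ) + deg E j = M) := by
  have hdeg := deg_pos (by omega) hunif hconn hE
  have hx u := upperTestVector_pos (k := k) (deg_lt_of_pairSum_le hk hunif hdeg hM u)
  have hxM := signlessApply_upperTestVector_le hk hunif hdeg hM
  obtain ⟨y, hy, hyρ⟩ := exists_pos_eigenvector (by omega) hunif hconn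
  refine ⟨le_of_le_signlessApply_of_signlessApply_le hunif (fun i => (hy i).le)
    (fun h => (hy (Classical.arbitrary _)).ne' (congr_fun h _)) hx (fun i => (hyρ i).ge) hxM,
    fun hρ e he i hi j hj hij => ?_⟩
  exact pairSum_eq_of_signlessApply_upperTestVector_eq hk hunif hdeg hM
    (fun u => (signlessApply_eq_of_le_signlessApply_of_signlessApply_le hunif hconn hy hx
      (fun i => (hyρ i).ge) hxM hρ.ge u).2) he hi hj hij

end UpperBound

/- As for `upperTestVector`, but only where `d_u < m`; elsewhere the diagonal term alone gives
`(Q x)_u ≥ m x_u ^ (k - 1)`, and the value `1` still dominates `d_i ^ (-1/(k-1))`. -/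
noncomputable def lowerTestVector (E : Finset (Finset (Fin n))) (k : ℕ) (m : ℝ) (u : Fin n) : ℝ :=
  invRoot (k - 1) (if (deg E u : ℝ) < m then m - deg E u else 1)

section LowerBound

variable {m : ℝ}

lemma lowerTestVector_pos (u : Fin n) : 0 < lowerTestVector E k m u := by
  refine invRoot_pos ?_
  split_ifs with h
  · linarith
  · exact one_pos

lemma mul_lowerTestVector_pow (hk : 2 ≤ k) {u : Fin n} (hu : (deg E u : ℝ) < m) :
    (m - deg E u) * lowerTestVector E k m u ^ (k - 1) = 1 := by
  rw [lowerTestVector, if_pos hu, mul_invRoot_pow (by omega) (sub_pos.mpr hu)]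

lemma invRoot_deg_le_lowerTestVector
    (hm : ∀ e ∈ E, ∀ i ∈ e, ∀ j ∈ e, i ≠ j → m ≤ (deg E i : ℝ) + deg E j) {i : Fin n}
    (hi : 0 < deg E i) : ∀ e ∈ E, i ∈ e → ∀ u ∈ e.erase i,
      invRoot (k - 1) (deg E i) ≤ lowerTestVector E k m u := by
  intro e he hie u hu
  refine invRoot_le_invRoot (by split_ifs with h <;> linarith) ?_
  split_ifs
  · linarith [hm e he u (mem_of_mem_erase hu) i hie (ne_of_mem_erase hu)]
  · exact_mod_cast hi

lemma one_le_adjApply_lowerTestVector (hk : 2 ≤ k) (hunif : ∀ e ∈ E, e.card = k)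
    (hdeg : ∀ i, 0 < deg E i)
    (hm : ∀ e ∈ E, ∀ i ∈ e, ∀ j ∈ e, i ≠ j → m ≤ (deg E i : ℝ) + deg E j) (i : Fin n) :
    1 ≤ adjApply E (lowerTestVector E k m) i :=
  (adjApply_invRoot_deg hk hunif (hdeg i)).symm.trans_le
    (adjApply_mono (fun _ => (invRoot_pos (Nat.cast_pos.mpr (hdeg i))).le)
      (invRoot_deg_le_lowerTestVector hm (hdeg i)))

lemma le_signlessApply_lowerTestVector (hk : 2 ≤ k) (hunif : ∀ e ∈ E, e.card = k)
    (hdeg : ∀ i, 0 < deg E i)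
    (hm : ∀ e ∈ E, ∀ i ∈ e, ∀ j ∈ e, i ≠ j → m ≤ (deg E i : ℝ) + deg E j) (i : Fin n) :
    m * lowerTestVector E k m i ^ (k - 1) ≤ signlessApply E k (lowerTestVector E k m) i := by
  have hA := one_le_adjApply_lowerTestVector hk hunif hdeg hm i
  rw [signlessApply]
  by_cases h : (deg E i : ℝ) < m
  · linear_combination hA + mul_lowerTestVector_pow hk h
  · have := mul_le_mul_of_nonneg_right (not_lt.mp h)
      (pow_pos (lowerTestVector_pos (E := E) (k := k) (m := m) i) (k - 1)).le
    linarith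

lemma pairSum_eq_of_signlessApply_lowerTestVector_eq (hk : 2 ≤ k) (hunif : ∀ e ∈ E, e.card = k)
    (hdeg : ∀ i, 0 < deg E i)
    (hm : ∀ e ∈ E, ∀ i ∈ e, ∀ j ∈ e, i ≠ j → m ≤ (deg E i : ℝ) + deg E j)
    (h : ∀ i, signlessApply E k (lowerTestVector E k m) i = m * lowerTestVector E k m i ^ (k - 1))
    {e : Finset (Fin n)} (he : e ∈ E) {i j : Fin n} (hi : i ∈ e) (hj : j ∈ e) (hij : i ≠ j) :
    (deg E i : ℝ) + deg E j = m := by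
  have hlt : ∀ u, (deg E u : ℝ) < m := fun u => by
    by_contra hu
    have := mul_le_mul_of_nonneg_right (not_lt.mp hu)
      (pow_pos (lowerTestVector_pos (E := E) (k := k) (m := m) u) (k - 1)).le
    have := h u
    rw [signlessApply] at this
    linarith [one_le_adjApply_lowerTestVector hk hunif hdeg hm u]
  have hadj : adjApply E (fun _ => invRoot (k - 1) (deg E j)) j =
      adjApply E (lowerTestVector E k m) j := by
    have := h j
    rw [signlessApply] at this
    rw [adjApply_invRoot_deg hk hunif (hdeg j)]
    linear_combination -this - mul_lowerTestVector_pow hk (hlt j)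
  have := eq_of_adjApply_eq (fun _ => invRoot_pos (Nat.cast_pos.mpr (hdeg j)))
    (invRoot_deg_le_lowerTestVector hm (hdeg j)) hadj e he hj i (mem_erase.mpr ⟨hij, hi⟩)
  rw [lowerTestVector, if_pos (hlt i)] at this
  have := invRoot_injOn (by omega) (Nat.cast_pos.mpr (hdeg j)) (sub_pos.mpr (hlt i)) this
  linarith

lemma le_specRad_signlessT_of_le_pairSum [Nonempty (Fin n)] (hk : 2 ≤ k)
    (hunif : ∀ e ∈ E, e.card = k) (hconn : HConnected E) (hE : E.Nonempty)
    (hm : ∀ e ∈ E, ∀ i ∈ e, ∀ j ∈ e, i ≠ j → m ≤ (deg E i : ℝ) + deg E j) :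
    m ≤ specRad (signlessT E k) ∧ (specRad (signlessT E k) = m →
      ∀ e ∈ E, ∀ i ∈ e, ∀ j ∈ e, i ≠ j → (deg E i : ℝ) + deg E j = m) := by
  have hdeg := deg_pos (by omega) hunif hconn hE
  have hxm := le_signlessApply_lowerTestVector hk hunif hdeg hm
  obtain ⟨y, hy, hyρ⟩ := exists_pos_eigenvector (by omega) hunif hconn
  refine ⟨le_of_le_signlessApply_of_signlessApply_le hunif (fun i => (lowerTestVector_pos i).le)
    (fun h => (lowerTestVector_pos (Classical.arbitrary _)).ne' (congr_fun h _)) hy hxm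
    (fun i => (hyρ i).le), fun hρ e he i hi j hj hij => ?_⟩
  exact pairSum_eq_of_signlessApply_lowerTestVector_eq hk hunif hdeg hm
    (fun u => (signlessApply_eq_of_le_signlessApply_of_signlessApply_le hunif hconn
      lowerTestVector_pos hy hxm (fun i => (hyρ i).le) hρ.le u).1) he hi hj hij

end LowerBound

lemma deg_eq_of_pairSum_eq (hk : 3 ≤ k) (hunif : ∀ e ∈ E, e.card = k) (hconn : HConnected E)
    {c : ℝ} (hc : ∀ e ∈ E, ∀ i ∈ e, ∀ j ∈ e, i ≠ j → (deg E i : ℝ) + deg E j = c)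
    (i j : Fin n) : deg E j = deg E i := by
  refine hconn.mem_of_closed (S := {v | deg E v = deg E i}) rfl (fun e he u hu hui v hv => ?_) j
  rcases eq_or_ne v u with rfl | hvu
  · exact hui
  have hcard : 0 < ((e.erase u).erase v).card := by
    rw [card_erase_of_mem (mem_erase.mpr ⟨hvu, hv⟩), card_erase_of_mem hu, hunif e he]
    omega
  obtain ⟨w, hw⟩ := card_pos.mp hcard
  simp only [mem_erase] at hw
  have h₁ := hc e he u hu w hw.2.2 hw.2.1.symm
  have h₂ := hc e he v hv w hw.2.2 hw.1.symm
  exact (Nat.cast_injective (R := ℝ) (by linarith : (deg E v : ℝ) = deg E u)).trans hui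

lemma specRad_signlessT_empty : specRad (signlessT (∅ : Finset (Finset (Fin n))) k) = 0 := by
  have h : ∀ μ, IsEigenvalue (signlessT (∅ : Finset (Finset (Fin n))) k) μ → μ = 0 := by
    rintro μ ⟨x, hx₀, hx⟩
    obtain ⟨i, hi⟩ := Function.ne_iff.mp hx₀
    have := hx i
    rw [tApply_signlessT (by simp)] at this
    simp [signlessApply, adjApply, deg] at this
    exact this.resolve_right fun h => hi h.1
  refine le_antisymm (Real.sSup_nonpos ?_) (Real.sSup_nonneg ?_) <;> rintro _ ⟨μ, hμ, rfl⟩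
  · simp [h μ hμ]
  · exact norm_nonneg μ

end HypSR

theorem stmt17_general {n k : ℕ} (hk : 3 ≤ k)
    (E : Finset (Finset (Fin n))) (hunif : ∀ e ∈ E, e.card = k)
    (hconn : HConnected E)
    (P : Set ℝ)
    (hP : P = {r : ℝ | ∃ e ∈ E, ∃ i ∈ e, ∃ j ∈ e, i ≠ j ∧
      r = (deg E i : ℝ) + (deg E j : ℝ)}) :
    sInf P ≤ specRad (signlessT E k) ∧ specRad (signlessT E k) ≤ sSup P ∧
      ((specRad (signlessT E k) = sInf P ∨ specRad (signlessT E k) = sSup P) ↔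
        ∃ d : ℕ, ∀ i : Fin n, deg E i = d) := by
  rcases E.eq_empty_or_nonempty with rfl | hE
  · simp [hP, specRad_signlessT_empty, deg]
    exact ⟨0, fun _ => rfl⟩
  obtain ⟨e₀, he₀⟩ := hE
  obtain ⟨i₀, hi₀, j₀, hj₀, hij₀⟩ :=
    Finset.one_lt_card.mp (by rw [hunif e₀ he₀]; omega : 1 < e₀.card)
  have : Nonempty (Fin n) := ⟨i₀⟩
  have hmem : ∀ e ∈ E, ∀ i ∈ e, ∀ j ∈ e, i ≠ j → (deg E i : ℝ) + deg E j ∈ P :=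
    fun e he i hi j hj hij => hP ▸ ⟨e, he, i, hi, j, hj, hij, rfl⟩
  have hfin : P.Finite := by
    rw [hP]
    exact (Set.finite_range fun p : Fin n × Fin n => (deg E p.1 : ℝ) + deg E p.2).subset
      fun r ⟨e, _, i, _, j, _, _, hr⟩ => ⟨(i, j), hr.symm⟩
  obtain ⟨hup, hupEq⟩ := specRad_signlessT_le_of_pairSum_le (by omega) hunif hconn ⟨e₀, he₀⟩
    fun e he i hi j hj hij => le_csSup hfin.bddAbove (hmem e he i hi j hj hij)
  obtain ⟨hlo, hloEq⟩ := le_specRad_signlessT_of_le_pairSum (by omega) hunif hconn ⟨e₀, he₀⟩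
    fun e he i hi j hj hij => csInf_le hfin.bddBelow (hmem e he i hi j hj hij)
  refine ⟨hlo, hup, fun h => ?_, fun ⟨d, hd⟩ => Or.inl ?_⟩
  · rcases h with h | h
    · exact ⟨deg E i₀, deg_eq_of_pairSum_eq hk hunif hconn (hloEq h) i₀⟩
    · exact ⟨deg E i₀, deg_eq_of_pairSum_eq hk hunif hconn (hupEq h) i₀⟩
  · have hPd : P = {(d : ℝ) + d} := by
      refine (Set.Nonempty.subset_singleton_iff ⟨_, hmem e₀ he₀ i₀ hi₀ j₀ hj₀ hij₀⟩).mp ?_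
      rw [hP]
      rintro _ ⟨e, -, i, -, j, -, -, rfl⟩
      simp [hd]
    rw [hPd, csInf_singleton] at hlo ⊢
    rw [hPd, csSup_singleton] at hup
    exact le_antisymm hup hlo

theorem stmt17 {n k : ℕ} (hn : 0 < n) (hk : 3 ≤ k)
    (E : Finset (Finset (Fin n))) (hunif : ∀ e ∈ E, e.card = k)
    (hconn : HConnected E)
    (P : Set ℝ)
    (hP : P = {r : ℝ | ∃ e ∈ E, ∃ i ∈ e, ∃ j ∈ e, i ≠ j ∧
      r = (deg E i : ℝ) + (deg E j : ℝ)}) :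
    sInf P ≤ specRad (signlessT E k) ∧ specRad (signlessT E k) ≤ sSup P ∧
      ((specRad (signlessT E k) = sInf P ∨ specRad (signlessT E k) = sSup P) ↔
        ∃ d : ℕ, ∀ i : Fin n, deg E i = d) :=
  stmt17_general hk E hunif hconn P hP
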